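/- arXiv:2404.14023 — 3 statements merged into one kernel-verified Lean document; each statement's English description precedes it below -/
import Mathlib

section
/- Let A₁, ..., A_m be symmetric n×n real matrices (n ≥ 4), H ≥ 0 with trace A₁ = nH and trace A_α = 0 for α ≥ 2, and let S = ∑_α ‖A_α‖² (Frobenius norms). Fix an integer p with 2 ≤ p ≤ n/2. Define Θ_p = ∑_α ( 2 ∑_{i=1}^p ∑_{j=p+1}^n (A_α)_{ij}² − (∑_{i=1}^p (A_α)_{ii})(∑_{j=p+1}^n (A_α)_{jj}) ). Then Θ_p ≤ (p(n−p)/n) S − 2p(n−p)H² − (n−2p) H ∑_{i=1}^p ((A₁)_{ii} − H). -/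
/-!
Estimate each shape operator separately. For a symmetric matrix `A` with trace `n h` and a splitting
of the indices into blocks of sizes `p` and `q = n - p`, the mixed block contributes
`2 ∑_{i ≤ p < j} A_ij² ≤ ‖A‖² - ∑ A_ii²`, while the diagonal term is controlled through
`e = ∑_{i ≤ p} (A_ii - h)`: the block traces are `p h + e` and `q h - e`, and Cauchy–Schwarz on both
blocks gives `n e² ≤ p q ∑ (A_ii - h)²`. Combining, the estimate reduces to
`(p q / n - 1) (‖A‖² - ∑ A_ii²) ≥ 0`, which holds because `p q ≥ p + q` once `p, q ≥ 2`.
Summing over the normal directions, only `A₁` has nonzero trace.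
-/

open Finset

/-- The summand of `Θ_p` for one shape operator, with `s` in the role of `{1, …, p}`. -/
def lawsonSimonsTheta {ι : Type*} [Fintype ι] [DecidableEq ι] (A : Matrix ι ι ℝ)
    (s : Finset ι) : ℝ :=
  2 * ∑ i ∈ s, ∑ j ∈ sᶜ, A i j ^ 2 - (∑ i ∈ s, A i i) * ∑ j ∈ sᶜ, A j j

section

variable {ι : Type*} [Fintype ι] [DecidableEq ι]

theorem Matrix.IsSymm.two_mul_sum_sq_compl_le {A : Matrix ι ι ℝ} (hA : A.IsSymm)
    (s : Finset ι) :
    2 * ∑ i ∈ s, ∑ j ∈ sᶜ, A i j ^ 2 ≤ ∑ i, ∑ j, A i j ^ 2 - ∑ i, A i i ^ 2 := by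
  have hdiag (t : Finset ι) : ∑ i ∈ t, A i i ^ 2 ≤ ∑ i ∈ t, ∑ j ∈ t, A i j ^ 2 :=
    sum_le_sum fun i hi => single_le_sum (fun j _ => sq_nonneg (A i j)) hi
  have hswap : ∑ i ∈ sᶜ, ∑ j ∈ s, A i j ^ 2 = ∑ i ∈ s, ∑ j ∈ sᶜ, A i j ^ 2 := by
    rw [sum_comm]
    simp only [hA.apply]
  simp only [← sum_add_sum_compl s, sum_add_distrib]
  linarith [hdiag s, hdiag sᶜ]

theorem card_mul_sq_sum_le_of_sum_eq_zero {x : ι → ℝ} (hx : ∑ i, x i = 0)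
    (s : Finset ι) :
    (Fintype.card ι : ℝ) * (∑ i ∈ s, x i) ^ 2 ≤ #s * #sᶜ * ∑ i, x i ^ 2 := by
  have hcompl : ∑ i ∈ sᶜ, x i = -∑ i ∈ s, x i := by
    linarith [sum_add_sum_compl s x]
  have hs : (∑ i ∈ s, x i) ^ 2 ≤ #s * ∑ i ∈ s, x i ^ 2 := sq_sum_le_card_mul_sum_sq
  have hsc : (∑ i ∈ s, x i) ^ 2 ≤ #sᶜ * ∑ i ∈ sᶜ, x i ^ 2 := by
    simpa [hcompl] using sq_sum_le_card_mul_sum_sq (s := sᶜ) (f := x)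
  rw [← card_add_card_compl s, ← sum_add_sum_compl s, Nat.cast_add]
  nlinarith [mul_le_mul_of_nonneg_left hs (Nat.cast_nonneg (α := ℝ) #sᶜ),
    mul_le_mul_of_nonneg_left hsc (Nat.cast_nonneg (α := ℝ) #s)]

theorem lawsonSimonsTheta_le {A : Matrix ι ι ℝ} (hA : A.IsSymm) {h : ℝ}
    (htr : A.trace = Fintype.card ι * h) {s : Finset ι} (hs : 2 ≤ #s) (hsc : 2 ≤ #sᶜ) :
    lawsonSimonsTheta A s ≤
      (#s * #sᶜ / Fintype.card ι) * ∑ i, ∑ j, A i j ^ 2 - 2 * #s * #sᶜ * h ^ 2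
        - (#sᶜ - #s) * h * ∑ i ∈ s, (A i i - h) := by
  set n : ℝ := (Fintype.card ι : ℝ)
  set p : ℝ := (#s : ℝ)
  set q : ℝ := (#sᶜ : ℝ)
  set e := ∑ i ∈ s, (A i i - h)
  have hnpq : n = p + q := by simp only [n, p, q, ← card_add_card_compl s, Nat.cast_add]
  have hp : 2 ≤ p := Nat.ofNat_le_cast.mpr hs
  have hq : 2 ≤ q := Nat.ofNat_le_cast.mpr hsc
  have htr' : ∑ i, A i i = n * h := htr
  have hdev : ∑ i, (A i i - h) = 0 := by simp [sum_sub_distrib, htr', n]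
  have hvar : ∑ i, (A i i - h) ^ 2 = ∑ i, A i i ^ 2 - n * h ^ 2 := by
    simp only [sub_sq, sum_add_distrib, sum_sub_distrib, ← sum_mul, ← mul_sum, htr',
      sum_const, card_univ, nsmul_eq_mul, n]
    ring
  have hTs : ∑ i ∈ s, A i i = p * h + e := by
    simp [e, p, sum_sub_distrib]
  have hTsc : ∑ j ∈ sᶜ, A j j = q * h - e := by
    have hsplit := sum_add_sum_compl s (fun i => A i i)
    rw [htr', hTs, hnpq] at hsplit
    linarith
  have hoff := hA.two_mul_sum_sq_compl_le s
  have hn : 0 < n := by linarith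
  set c := p * q / n
  have hcn : c * n = p * q := div_mul_cancel₀ _ hn.ne'
  -- `p q ≥ p + q` is `(p - 1) (q - 1) ≥ 1`
  have hc : 1 ≤ c := by
    rw [le_div_iff₀ hn]
    nlinarith
  have he : e ^ 2 ≤ c * ∑ i, A i i ^ 2 - p * q * h ^ 2 := by
    refine le_of_mul_le_mul_left ?_ hn
    calc n * e ^ 2 ≤ p * q * ∑ i, (A i i - h) ^ 2 := card_mul_sq_sum_le_of_sum_eq_zero hdev s
      _ = n * (c * ∑ i, A i i ^ 2 - p * q * h ^ 2) := by rw [hvar, ← hcn]; ring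
  have hmixed : 0 ≤ ∑ i ∈ s, ∑ j ∈ sᶜ, A i j ^ 2 := by positivity
  have hrest : 0 ≤ (c - 1) * (∑ i, ∑ j, A i j ^ 2 - ∑ i, A i i ^ 2) :=
    mul_nonneg (by linarith) (by linarith)
  rw [lawsonSimonsTheta, hTs, hTsc]
  linarith

end

theorem theta_p_second_estimate_general (n m p : ℕ) (hp : 2 ≤ p)
    (hpn : 2 * p ≤ n) (H S : ℝ)
    (A : Fin (m + 1) → Matrix (Fin n) (Fin n) ℝ)
    (hsym : ∀ α, (A α).IsSymm)
    (htr1 : (A 0).trace = (n : ℝ) * H)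
    (htr : ∀ α, α ≠ 0 → (A α).trace = 0)
    (hS : S = ∑ α, ∑ i, ∑ j, (A α i j) ^ 2) :
    (∑ α, (2 * ∑ i ∈ univ.filter (fun i : Fin n => (i : ℕ) < p),
        ∑ j ∈ univ.filter (fun j : Fin n => p ≤ (j : ℕ)), (A α i j) ^ 2
      - (∑ i ∈ univ.filter (fun i : Fin n => (i : ℕ) < p), A α i i) *
        (∑ j ∈ univ.filter (fun j : Fin n => p ≤ (j : ℕ)), A α j j))) ≤
      ((p : ℝ) * ((n : ℝ) - p) / n) * S - 2 * p * ((n : ℝ) - p) * H ^ 2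
        - ((n : ℝ) - 2 * p) * H *
            ∑ i ∈ univ.filter (fun i : Fin n => (i : ℕ) < p), (A 0 i i - H) := by
  set s : Finset (Fin n) := univ.filter (fun i : Fin n => (i : ℕ) < p)
  have hcard : #s = p := by simp only [s, Fin.card_filter_val_lt]; omega
  have hcardc : #sᶜ = n - p := by rw [card_compl, hcard, Fintype.card_fin]
  have hbound (B : Matrix (Fin n) (Fin n) ℝ) (hB : B.IsSymm) (h : ℝ)
      (htrB : B.trace = n * h) :
      lawsonSimonsTheta B s ≤ (p * (n - p) / n) * ∑ i, ∑ j, B i j ^ 2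
        - 2 * p * (n - p) * h ^ 2 - (n - 2 * p) * h * ∑ i ∈ s, (B i i - h) := by
    have := lawsonSimonsTheta_le hB (h := h) (by simpa using htrB) (s := s)
      (by omega) (by omega)
    rw [hcard, hcardc, Nat.cast_sub (by omega), Fintype.card_fin] at this
    linarith
  have htraceless : ∑ k : Fin m, lawsonSimonsTheta (A k.succ) s ≤
      (p * (n - p) / n) * ∑ k : Fin m, ∑ i, ∑ j, A k.succ i j ^ 2 := by
    rw [mul_sum]
    exact sum_le_sum fun k _ => by
      simpa using hbound _ (hsym _) 0 (by simp [htr _ k.succ_ne_zero])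
  have hsc : sᶜ = univ.filter (fun j : Fin n => p ≤ (j : ℕ)) := by
    simp [s, compl_filter]
  rw [← hsc]
  change ∑ α, lawsonSimonsTheta (A α) s ≤ _
  rw [Fin.sum_univ_succ, hS, Fin.sum_univ_succ, mul_add]
  linarith [hbound _ (hsym 0) H htr1]

/-- Matrix formulation of estimate (15) in Proposition 3. -/
theorem theta_p_second_estimate (n m p : ℕ) (hn : 4 ≤ n) (hp : 2 ≤ p)
    (hpn : 2 * p ≤ n) (H S : ℝ) (hH : 0 ≤ H)
    (A : Fin (m + 1) → Matrix (Fin n) (Fin n) ℝ)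
    (hsym : ∀ α, (A α).IsSymm)
    (htr1 : (A 0).trace = (n : ℝ) * H)
    (htr : ∀ α, α ≠ 0 → (A α).trace = 0)
    (hS : S = ∑ α, ∑ i, ∑ j, (A α i j) ^ 2) :
    (∑ α, (2 * ∑ i ∈ univ.filter (fun i : Fin n => (i : ℕ) < p),
        ∑ j ∈ univ.filter (fun j : Fin n => p ≤ (j : ℕ)), (A α i j) ^ 2
      - (∑ i ∈ univ.filter (fun i : Fin n => (i : ℕ) < p), A α i i) *
        (∑ j ∈ univ.filter (fun j : Fin n => p ≤ (j : ℕ)), A α j j))) ≤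
      ((p : ℝ) * ((n : ℝ) - p) / n) * S - 2 * p * ((n : ℝ) - p) * H ^ 2
        - ((n : ℝ) - 2 * p) * H *
            ∑ i ∈ univ.filter (fun i : Fin n => (i : ℕ) < p), (A 0 i i - H) :=
  theta_p_second_estimate_general n m p hp hpn H S A hsym htr1 htr hS
end

section
/- Let A₁, ..., A_m be symmetric n×n real matrices, n ≥ 4, with trace A₁ = nH (H ≥ 0) and trace A_α = 0 for α ≥ 2. For a unit coordinate vector e_i define Ric(e_i) = (n−1)c + nH (A₁)_{ii} − ∑_α ‖A_α e_i‖², where c is a fixed real number. Fix p with 2 ≤ p ≤ n/2 and let Θ_p be as in the Lawson–Simons quantity. Then Θ_p ≤ p ∑_{i=1}^p ((n−1)(c+H²) − Ric(e_i)) − p(n−p)H² + (p−1) n H ∑_{i=1}^p ((A₁)_{ii} − H). -/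
/-!
Expanding `∑_{j > p} (A_α)_{jj} = tr A_α - ∑_{i ≤ p} (A_α)_{ii}`, the `α`-th term of `Θ_p` becomes
`2 O_α + S_α² - S_α tr A_α`, where `S_α` is the partial trace over the first `p` indices and `O_α`
the squared norm of the off-diagonal block. Cauchy–Schwarz gives `S_α² ≤ p ∑_{i,j ≤ p} (A_α)_{ij}²`,
and `2 O_α ≤ p O_α` since `p ≥ 2`, so the term is at most `p ∑_{i ≤ p} ‖A_α e_i‖² - S_α tr A_α`.
Only `α = 1` has nonzero trace, and inserting the Gauss equation for `Ric(e_i)` turns the sum over `α`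
of these bounds into exactly the right-hand side: the `H²` terms cancel.
-/

open Finset

section PartialTrace

variable {ι : Type*} [Fintype ι] [DecidableEq ι]

theorem Matrix.sum_compl_diag_eq_trace_sub (M : Matrix ι ι ℝ) (P : Finset ι) :
    ∑ j ∈ Pᶜ, M j j = M.trace - ∑ i ∈ P, M i i := by
  rw [Matrix.trace, ← sum_add_sum_compl P]
  simp only [Matrix.diag_apply, add_sub_cancel_left]

theorem Matrix.two_mul_sum_sq_compl_add_sq_sum_diag_le (M : Matrix ι ι ℝ) (P : Finset ι)
    (hP : 2 ≤ #P) :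
    2 * ∑ i ∈ P, ∑ j ∈ Pᶜ, M i j ^ 2 + (∑ i ∈ P, M i i) ^ 2 ≤
      #P * ∑ i ∈ P, ∑ j, M i j ^ 2 := by
  have hrows : ∑ i ∈ P, ∑ j, M i j ^ 2 =
      ∑ i ∈ P, ∑ j ∈ P, M i j ^ 2 + ∑ i ∈ P, ∑ j ∈ Pᶜ, M i j ^ 2 := by
    rw [← sum_add_distrib]
    exact sum_congr rfl fun i _ => (sum_add_sum_compl P _).symm
  have hdiag : (∑ i ∈ P, M i i) ^ 2 ≤ #P * ∑ i ∈ P, ∑ j ∈ P, M i j ^ 2 :=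
    (sq_sum_le_card_mul_sum_sq ..).trans <| by
      gcongr with i hi
      exact single_le_sum (fun j _ => sq_nonneg (M i j)) hi
  have hoff : 2 * ∑ i ∈ P, ∑ j ∈ Pᶜ, M i j ^ 2 ≤ #P * ∑ i ∈ P, ∑ j ∈ Pᶜ, M i j ^ 2 := by
    gcongr
    exact_mod_cast hP
  rw [hrows]
  linarith

theorem Matrix.two_mul_sum_sq_compl_sub_le (M : Matrix ι ι ℝ) (P : Finset ι) (hP : 2 ≤ #P) :
    2 * ∑ i ∈ P, ∑ j ∈ Pᶜ, M i j ^ 2 - (∑ i ∈ P, M i i) * ∑ j ∈ Pᶜ, M j j ≤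
      #P * ∑ i ∈ P, ∑ j, M i j ^ 2 - (∑ i ∈ P, M i i) * M.trace := by
  rw [M.sum_compl_diag_eq_trace_sub P]
  linarith [M.two_mul_sum_sq_compl_add_sq_sum_diag_le P hP]

end PartialTrace

theorem Fin.filter_le_val_eq_compl {n : ℕ} (p : ℕ) :
    univ.filter (fun j : Fin n => p ≤ (j : ℕ)) = (univ.filter fun i : Fin n => (i : ℕ) < p)ᶜ := by
  simp only [compl_filter, not_lt]

theorem Fin.card_filter_val_lt_of_le {n p : ℕ} (hp : p ≤ n) :
    #(univ.filter fun i : Fin n => (i : ℕ) < p) = p := by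
  rw [Fin.card_filter_val_lt, min_eq_right hp]

theorem theta_p_first_estimate_general (n m p : ℕ) (hp : 2 ≤ p)
    (hpn : 2 * p ≤ n) (c H : ℝ)
    (A : Fin (m + 1) → Matrix (Fin n) (Fin n) ℝ)
    (htr1 : (A 0).trace = (n : ℝ) * H)
    (htr : ∀ α, α ≠ 0 → (A α).trace = 0)
    (Ric : Fin n → ℝ)
    (hRic : ∀ i, Ric i =
      ((n : ℝ) - 1) * c + (n : ℝ) * H * A 0 i i - ∑ α, ∑ j, (A α i j) ^ 2) :
    (∑ α, (2 * ∑ i ∈ univ.filter (fun i : Fin n => (i : ℕ) < p),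
        ∑ j ∈ univ.filter (fun j : Fin n => p ≤ (j : ℕ)), (A α i j) ^ 2
      - (∑ i ∈ univ.filter (fun i : Fin n => (i : ℕ) < p), A α i i) *
        (∑ j ∈ univ.filter (fun j : Fin n => p ≤ (j : ℕ)), A α j j))) ≤
      (p : ℝ) * (∑ i ∈ univ.filter (fun i : Fin n => (i : ℕ) < p),
          (((n : ℝ) - 1) * (c + H ^ 2) - Ric i))
        - (p : ℝ) * ((n : ℝ) - p) * H ^ 2
        + ((p : ℝ) - 1) * (n : ℝ) * H *
            ∑ i ∈ univ.filter (fun i : Fin n => (i : ℕ) < p), (A 0 i i - H) := by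
  set P := univ.filter fun i : Fin n => (i : ℕ) < p
  have hcard : #P = p := Fin.card_filter_val_lt_of_le (by omega)
  have htrace_sum : ∑ α, (∑ i ∈ P, A α i i) * (A α).trace = n * H * ∑ i ∈ P, A 0 i i := by
    simp [Fin.sum_univ_succ, htr1, htr _ (Fin.succ_ne_zero _), mul_comm]
  have hRic_sum : ∑ i ∈ P, (((n : ℝ) - 1) * (c + H ^ 2) - Ric i) =
      p * (n - 1) * H ^ 2 - n * H * ∑ i ∈ P, A 0 i i + ∑ α, ∑ i ∈ P, ∑ j, A α i j ^ 2 := by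
    have hterm : ∀ i, ((n : ℝ) - 1) * (c + H ^ 2) - Ric i =
        (n - 1) * H ^ 2 - n * H * A 0 i i + ∑ α, ∑ j, A α i j ^ 2 := fun i => by
      rw [hRic]; ring
    rw [sum_congr rfl fun i _ => hterm i, sum_add_distrib, sum_sub_distrib, sum_const, hcard,
      nsmul_eq_mul, ← mul_sum, sum_comm (s := P)]
    ring
  rw [Fin.filter_le_val_eq_compl]
  calc _ ≤ ∑ α, (p * ∑ i ∈ P, ∑ j, A α i j ^ 2 - (∑ i ∈ P, A α i i) * (A α).trace) :=
        sum_le_sum fun α _ => by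
          simpa only [hcard] using (A α).two_mul_sum_sq_compl_sub_le P (hcard.symm ▸ hp)
    _ = _ := by
        rw [sum_sub_distrib, ← mul_sum, htrace_sum, hRic_sum, sum_sub_distrib, sum_const, hcard,
          nsmul_eq_mul]
        ring

/-- Matrix formulation of estimate (8) in Proposition 3, where
`Ric(e_i) = (n−1)c + nH (A₁)_{ii} − ∑_α ‖A_α e_i‖²`. -/
theorem theta_p_first_estimate (n m p : ℕ) (hn : 4 ≤ n) (hp : 2 ≤ p)
    (hpn : 2 * p ≤ n) (c H : ℝ) (hH : 0 ≤ H)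
    (A : Fin (m + 1) → Matrix (Fin n) (Fin n) ℝ)
    (hsym : ∀ α, (A α).IsSymm)
    (htr1 : (A 0).trace = (n : ℝ) * H)
    (htr : ∀ α, α ≠ 0 → (A α).trace = 0)
    (Ric : Fin n → ℝ)
    (hRic : ∀ i, Ric i =
      ((n : ℝ) - 1) * c + (n : ℝ) * H * A 0 i i - ∑ α, ∑ j, (A α i j) ^ 2) :
    (∑ α, (2 * ∑ i ∈ univ.filter (fun i : Fin n => (i : ℕ) < p),
        ∑ j ∈ univ.filter (fun j : Fin n => p ≤ (j : ℕ)), (A α i j) ^ 2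
      - (∑ i ∈ univ.filter (fun i : Fin n => (i : ℕ) < p), A α i i) *
        (∑ j ∈ univ.filter (fun j : Fin n => p ≤ (j : ℕ)), A α j j))) ≤
      (p : ℝ) * (∑ i ∈ univ.filter (fun i : Fin n => (i : ℕ) < p),
          (((n : ℝ) - 1) * (c + H ^ 2) - Ric i))
        - (p : ℝ) * ((n : ℝ) - p) * H ^ 2
        + ((p : ℝ) - 1) * (n : ℝ) * H *
            ∑ i ∈ univ.filter (fun i : Fin n => (i : ℕ) < p), (A 0 i i - H) :=
  theta_p_first_estimate_general n m p hp hpn c H A htr1 htr Ric hRic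
end

section
/- Let A₁,...,A_m be symmetric n×n real matrices (n ≥ 4), c < 0, H ≥ 0, with trace A₁ = nH, trace A_α = 0 for α ≥ 2. For a unit vector e₁ define Ric(e₁) = (n−1)c + nH(A₁)₁₁ − ∑_α ‖A_α e₁‖², set ‖φ‖² = ∑_α ‖A_α‖² − nH², and suppose ‖φ‖² ≤ (2n/(n+2))((n+1)c + (n−1)H²) and Ric(e₁) > (1/(n+2))((n²−n−4)c + n(n−1)H²). Then ∑_{j=2}^n ( 2∑_α (A_α)₁ⱼ² − ∑_α (A_α)₁₁ (A_α)ⱼⱼ ) < (n+1)c. Moreover the identity ∑_{j=2}^n (2∑_α (A_α)₁ⱼ² − ∑_α (A_α)₁₁(A_α)ⱼⱼ) = ∑_{j=2}^n ‖φ(e₁,e_j)‖² + (n−1)c − Ric(e₁) holds, where φ(e₁,e_j) has components (A_α)₁ⱼ − δ₁ⱼ H δ_{α1}. -/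
/-!
Write `S = ∑_α ∑_{j≠1} (A_α)₁ⱼ²`. Since `trace A_α = 0` for `α ≥ 2`, the product sum in `Θ₁`
collapses to `nH (A₁)₁₁ − ∑_α (A_α)₁₁²`, which gives `Θ₁ = S + (n−1)c − Ric(e₁)`. By symmetry
each `(A_α)₁ⱼ` with `j ≠ 1` occurs twice in `‖A_α‖²`, and Cauchy–Schwarz on the diagonal of `A₁`
gives `nH² ≤ ∑ᵢ (A₁)ᵢᵢ²`, so `2S ≤ ‖φ‖²`. Inserting the two pinching bounds, the `H²` terms
cancel and what is left is exactly `(n+1)c`.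
-/

open Finset

namespace Matrix

variable {n : Type*} [Fintype n]

lemma sum_erase_diag_mul_diag [DecidableEq n] (A : Matrix n n ℝ) (e : n) :
    ∑ j ∈ univ.erase e, A e e * A j j = A e e * A.trace - A e e ^ 2 := by
  rw [← mul_sum, sum_erase_eq_sub (mem_univ e), trace]
  simp only [diag_apply]
  ring

lemma sq_add_sq_diag_le_sum_sq_row [DecidableEq n] (A : Matrix n n ℝ) {i e : n} (h : i ≠ e) :
    A i e ^ 2 + A i i ^ 2 ≤ ∑ j, A i j ^ 2 := by
  rw [← sum_pair (f := fun j => A i j ^ 2) h.symm]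
  exact sum_le_sum_of_subset_of_nonneg (subset_univ _) fun j _ _ => sq_nonneg _

lemma two_mul_sum_sq_row_add_sum_sq_diag_le [DecidableEq n] {A : Matrix n n ℝ} (hA : A.IsSymm)
    (e : n) :
    2 * ∑ j ∈ univ.erase e, A e j ^ 2 + ∑ i, A i i ^ 2 ≤ ∑ i, ∑ j, A i j ^ 2 := by
  have hrows : ∑ i ∈ univ.erase e, (A e i ^ 2 + A i i ^ 2)
      ≤ ∑ i ∈ univ.erase e, ∑ j, A i j ^ 2 := by
    refine sum_le_sum fun i hi => ?_
    rw [← hA.apply e i]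
    exact A.sq_add_sq_diag_le_sum_sq_row (ne_of_mem_erase hi)
  rw [sum_add_distrib] at hrows
  rw [← add_sum_erase _ (fun i => ∑ j, A i j ^ 2) (mem_univ e),
    ← add_sum_erase _ (fun j => A e j ^ 2) (mem_univ e),
    ← add_sum_erase _ (fun i => A i i ^ 2) (mem_univ e)]
  linarith

lemma trace_sq_le_card_mul_sum_sq_diag (A : Matrix n n ℝ) :
    A.trace ^ 2 ≤ Fintype.card n * ∑ i, A i i ^ 2 :=
  sq_sum_le_card_mul_sum_sq

end Matrix

open Matrix

section Family

variable {ι n : Type*} [Fintype ι] [Fintype n] [DecidableEq n]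
  {A : ι → Matrix n n ℝ} {α₀ : ι} {H : ℝ}

lemma sum_erase_sum_diag_mul_diag [DecidableEq ι] (htr₀ : (A α₀).trace = Fintype.card n * H)
    (htr : ∀ α ≠ α₀, (A α).trace = 0) (e : n) :
    ∑ j ∈ univ.erase e, ∑ α, A α e e * A α j j
      = Fintype.card n * H * A α₀ e e - ∑ α, A α e e ^ 2 := by
  rw [sum_comm]
  simp only [sum_erase_diag_mul_diag, sum_sub_distrib]
  rw [Fintype.sum_eq_single α₀ fun α hα => by rw [htr α hα, mul_zero], htr₀]
  ring

lemma sum_erase_two_mul_sum_sq_sub_eq [DecidableEq ι]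
    (htr₀ : (A α₀).trace = Fintype.card n * H)
    (htr : ∀ α ≠ α₀, (A α).trace = 0) (e : n) :
    ∑ j ∈ univ.erase e, (2 * ∑ α, A α e j ^ 2 - ∑ α, A α e e * A α j j)
      = ∑ j ∈ univ.erase e, ∑ α, A α e j ^ 2 + ∑ α, ∑ j, A α e j ^ 2
        - Fintype.card n * H * A α₀ e e := by
  have hrow : ∑ α, ∑ j, A α e j ^ 2
      = ∑ α, A α e e ^ 2 + ∑ j ∈ univ.erase e, ∑ α, A α e j ^ 2 := by
    simp only [← add_sum_erase _ _ (mem_univ e), sum_add_distrib]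
    rw [sum_comm (s := univ.erase e)]
  rw [sum_sub_distrib, ← mul_sum, sum_erase_sum_diag_mul_diag htr₀ htr, hrow]
  ring

lemma two_mul_sum_sum_erase_sq_le (hsym : ∀ α, (A α).IsSymm)
    (htr₀ : (A α₀).trace = Fintype.card n * H) (e : n) :
    2 * ∑ j ∈ univ.erase e, ∑ α, A α e j ^ 2
      ≤ ∑ α, ∑ i, ∑ j, A α i j ^ 2 - Fintype.card n * H ^ 2 := by
  have hcard : (0 : ℝ) < Fintype.card n := by exact_mod_cast Fintype.card_pos_iff.mpr ⟨e⟩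
  have hdiag₀ : Fintype.card n * H ^ 2 ≤ ∑ i, A α₀ i i ^ 2 := by
    have := (A α₀).trace_sq_le_card_mul_sum_sq_diag
    rw [htr₀] at this
    nlinarith
  have hdiag : ∑ i, A α₀ i i ^ 2 ≤ ∑ α, ∑ i, A α i i ^ 2 :=
    single_le_sum (f := fun α => ∑ i, A α i i ^ 2)
      (fun α _ => sum_nonneg fun i _ => sq_nonneg _) (mem_univ α₀)
  have hrows := sum_le_sum fun α (_ : α ∈ univ) =>
    two_mul_sum_sq_row_add_sum_sq_diag_le (hsym α) e
  rw [sum_add_distrib, ← mul_sum, sum_comm] at hrows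
  linarith

end Family

lemma lt_of_pinching {N c H φsq Ric S : ℝ} (hN : 0 < N + 2) (hS : 2 * S ≤ φsq)
    (hpinch1 : φsq ≤ (2 * N / (N + 2)) * ((N + 1) * c + (N - 1) * H ^ 2))
    (hpinch2 : Ric > (1 / (N + 2)) * ((N ^ 2 - N - 4) * c + N * (N - 1) * H ^ 2)) :
    S + (N - 1) * c - Ric < (N + 1) * c := by
  have hcancel : (2 * N / (N + 2)) * ((N + 1) * c + (N - 1) * H ^ 2) / 2 + (N - 1) * c
      - (1 / (N + 2)) * ((N ^ 2 - N - 4) * c + N * (N - 1) * H ^ 2) = (N + 1) * c := by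
    field_simp
    ring
  linarith

theorem lemma4_theta1_estimate_general (n m : ℕ) (hnpos : 0 < n)
    (c H : ℝ)
    (A : Fin (m + 1) → Matrix (Fin n) (Fin n) ℝ)
    (hsym : ∀ α, (A α).IsSymm)
    (htr1 : (A 0).trace = (n : ℝ) * H)
    (htr : ∀ α, α ≠ 0 → (A α).trace = 0)
    (φsq Ric1 : ℝ)
    (hφsq : φsq = (∑ α, ∑ i, ∑ j, (A α i j) ^ 2) - (n : ℝ) * H ^ 2)
    (hRic1 : Ric1 = ((n : ℝ) - 1) * c
      + (n : ℝ) * H * A 0 ⟨0, hnpos⟩ ⟨0, hnpos⟩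
      - ∑ α, ∑ j, (A α ⟨0, hnpos⟩ j) ^ 2)
    (hpinch1 : φsq ≤ (2 * (n : ℝ) / ((n : ℝ) + 2)) *
      (((n : ℝ) + 1) * c + ((n : ℝ) - 1) * H ^ 2))
    (hpinch2 : Ric1 > (1 / ((n : ℝ) + 2)) *
      (((n : ℝ) ^ 2 - n - 4) * c + (n : ℝ) * ((n : ℝ) - 1) * H ^ 2)) :
    (∑ j ∈ univ.filter (fun j : Fin n => j ≠ ⟨0, hnpos⟩),
        (2 * ∑ α, (A α ⟨0, hnpos⟩ j) ^ 2
          - ∑ α, A α ⟨0, hnpos⟩ ⟨0, hnpos⟩ * A α j j)) < ((n : ℝ) + 1) * c ∧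
    (∑ j ∈ univ.filter (fun j : Fin n => j ≠ ⟨0, hnpos⟩),
        (2 * ∑ α, (A α ⟨0, hnpos⟩ j) ^ 2
          - ∑ α, A α ⟨0, hnpos⟩ ⟨0, hnpos⟩ * A α j j)) =
      (∑ j ∈ univ.filter (fun j : Fin n => j ≠ ⟨0, hnpos⟩),
          ∑ α, (A α ⟨0, hnpos⟩ j
            - (if j = ⟨0, hnpos⟩ ∧ α = 0 then H else 0)) ^ 2)
        + ((n : ℝ) - 1) * c - Ric1 := by
  set e : Fin n := ⟨0, hnpos⟩
  have htr₀ : (A 0).trace = Fintype.card (Fin n) * H := by rw [Fintype.card_fin, htr1]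
  have hφ : ∑ j ∈ univ.erase e, ∑ α, (A α e j - (if j = e ∧ α = 0 then H else 0)) ^ 2
      = ∑ j ∈ univ.erase e, ∑ α, A α e j ^ 2 :=
    sum_congr rfl fun j hj => by simp [ne_of_mem_erase hj]
  have hΘ := sum_erase_two_mul_sum_sq_sub_eq htr₀ htr e
  have hS := two_mul_sum_sum_erase_sq_le hsym htr₀ e
  rw [Fintype.card_fin] at hΘ hS
  simp only [filter_ne', hφ, hΘ]
  have hident : ∑ j ∈ univ.erase e, ∑ α, A α e j ^ 2 + ∑ α, ∑ j, A α e j ^ 2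
      - n * H * A 0 e e = ∑ j ∈ univ.erase e, ∑ α, A α e j ^ 2 + (n - 1) * c - Ric1 := by
    rw [hRic1]; ring
  rw [hident]
  exact ⟨lt_of_pinching (by positivity) (hφsq ▸ hS) hpinch1 hpinch2, rfl⟩

/-- Matrix formulation of the computation in Lemma 4: under the pinching
hypotheses, the Lawson–Simons quantity `Θ₁` for `p = 1` is `< (n+1)c`, and it
equals `∑_{j≥2} ‖φ(e₁,e_j)‖² + (n−1)c − Ric(e₁)`, where `φ` has components
`(A_α)₁ⱼ − δ₁ⱼ H δ_{α1}`. -/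
theorem lemma4_theta1_estimate (n m : ℕ) (hn : 4 ≤ n) (hnpos : 0 < n)
    (c H : ℝ) (hc : c < 0) (hH : 0 ≤ H)
    (A : Fin (m + 1) → Matrix (Fin n) (Fin n) ℝ)
    (hsym : ∀ α, (A α).IsSymm)
    (htr1 : (A 0).trace = (n : ℝ) * H)
    (htr : ∀ α, α ≠ 0 → (A α).trace = 0)
    (φsq Ric1 : ℝ)
    (hφsq : φsq = (∑ α, ∑ i, ∑ j, (A α i j) ^ 2) - (n : ℝ) * H ^ 2)
    (hRic1 : Ric1 = ((n : ℝ) - 1) * c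
      + (n : ℝ) * H * A 0 ⟨0, hnpos⟩ ⟨0, hnpos⟩
      - ∑ α, ∑ j, (A α ⟨0, hnpos⟩ j) ^ 2)
    (hpinch1 : φsq ≤ (2 * (n : ℝ) / ((n : ℝ) + 2)) *
      (((n : ℝ) + 1) * c + ((n : ℝ) - 1) * H ^ 2))
    (hpinch2 : Ric1 > (1 / ((n : ℝ) + 2)) *
      (((n : ℝ) ^ 2 - n - 4) * c + (n : ℝ) * ((n : ℝ) - 1) * H ^ 2)) :
    (∑ j ∈ univ.filter (fun j : Fin n => j ≠ ⟨0, hnpos⟩),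
        (2 * ∑ α, (A α ⟨0, hnpos⟩ j) ^ 2
          - ∑ α, A α ⟨0, hnpos⟩ ⟨0, hnpos⟩ * A α j j)) < ((n : ℝ) + 1) * c ∧
    (∑ j ∈ univ.filter (fun j : Fin n => j ≠ ⟨0, hnpos⟩),
        (2 * ∑ α, (A α ⟨0, hnpos⟩ j) ^ 2
          - ∑ α, A α ⟨0, hnpos⟩ ⟨0, hnpos⟩ * A α j j)) =
      (∑ j ∈ univ.filter (fun j : Fin n => j ≠ ⟨0, hnpos⟩),
          ∑ α, (A α ⟨0, hnpos⟩ j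
            - (if j = ⟨0, hnpos⟩ ∧ α = 0 then H else 0)) ^ 2)
        + ((n : ℝ) - 1) * c - Ric1 :=
  lemma4_theta1_estimate_general n m hnpos c H A hsym htr1 htr φsq Ric1 hφsq hRic1 hpinch1 hpinch2
end
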